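/- arXiv:2509.18860 — 8 statements merged into one kernel-verified Lean document; each statement's English description precedes it below -/
import Mathlib

section
/- For every integer k ≥ 3, k^((k+1)!) > ((k+1)!)^k + (k+1)^(k!). -/
/-!
Put `N = (k+1)!`. Since `k + 1 ≤ k²`, both `(k+1)^(k!)` and `N^k ≤ ((k+1) k^k)^k` are powers of `k`
with exponent at most `N - 1`, because `N = (k+1) k! ≥ (k+1) · 2k`. Their sum is therefore at most
`2 k^(N-1) < k^N`.
-/

open Nat

lemma Nat.succ_le_sq {k : ℕ} (hk : 2 ≤ k) : k + 1 ≤ k ^ 2 := by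
  nlinarith

lemma Nat.succ_pow_le_pow_two_mul {k : ℕ} (hk : 2 ≤ k) (m : ℕ) : (k + 1) ^ m ≤ k ^ (2 * m) := by
  rw [pow_mul]
  exact Nat.pow_le_pow_left (succ_le_sq hk) m

lemma Nat.factorial_succ_pow_le {k : ℕ} (hk : 2 ≤ k) : (k + 1)! ^ k ≤ k ^ (k ^ 2 + 2 * k) :=
  calc (k + 1)! ^ k = (k + 1) ^ k * k ! ^ k := by rw [factorial_succ, mul_pow]
    _ ≤ k ^ (2 * k) * (k ^ k) ^ k :=
        Nat.mul_le_mul (succ_pow_le_pow_two_mul hk k) (Nat.pow_le_pow_left (factorial_le_pow k) k)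
    _ = k ^ (k ^ 2 + 2 * k) := by rw [← pow_mul, ← pow_add]; ring_nf

lemma Nat.two_mul_le_factorial {k : ℕ} (hk : 3 ≤ k) : 2 * k ≤ k ! := by
  obtain ⟨m, rfl⟩ : ∃ m, k = m + 1 := ⟨k - 1, by omega⟩
  rw [factorial_succ, mul_comm 2]
  exact Nat.mul_le_mul_left _ ((self_le_factorial 2).trans (factorial_le (by omega)))

lemma Nat.add_lt_pow_of_le_pow_pred {k n a b : ℕ} (hk : 3 ≤ k) (hn : 1 ≤ n)
    (ha : a ≤ k ^ (n - 1)) (hb : b ≤ k ^ (n - 1)) : a + b < k ^ n :=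
  calc a + b ≤ 2 * k ^ (n - 1) := by omega
    _ < k * k ^ (n - 1) := Nat.mul_lt_mul_of_pos_right (by omega) (Nat.pow_pos (by omega))
    _ = k ^ n := by rw [← pow_succ']; congr 1; omega

theorem stmt_2 (k : ℕ) (hk : 3 ≤ k) :
    k ^ (Nat.factorial (k + 1)) >
      (Nat.factorial (k + 1)) ^ k + (k + 1) ^ (Nat.factorial k) := by
  have hN : (k + 1)! = (k + 1) * k ! := factorial_succ k
  have h2k := two_mul_le_factorial hk
  have hsq : k ^ 2 + 2 * k < (k + 1)! := by rw [hN]; nlinarith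
  have hfact : 2 * k ! < (k + 1)! := by rw [hN]; nlinarith
  apply add_lt_pow_of_le_pow_pred hk (factorial_pos _)
  · exact (factorial_succ_pow_le (by omega)).trans (Nat.pow_le_pow_right (by omega) (by omega))
  · exact (succ_pow_le_pow_two_mul (by omega) _).trans
      (Nat.pow_le_pow_right (by omega) (by omega))
end

section
/- For every integer k ≥ 3, (k!)^((k+1)!) > ((k+1)!)^(k!) + k^(k+1). -/
theorem stmt_5 (k : ℕ) (hk : 3 ≤ k) :
    (Nat.factorial k) ^ (Nat.factorial (k + 1)) >
      (Nat.factorial (k + 1)) ^ (Nat.factorial k) + k ^ (k + 1) := by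
  have hkf : k + 1 ≤ k.factorial := Nat.lt_factorial_self hk
  have hk6 : 6 ≤ k.factorial := by
    calc 6 = Nat.factorial 3 := rfl
    _ ≤ k.factorial := Nat.factorial_le hk
  have h1 : 2 * (k + 1).factorial ≤ k.factorial ^ (k + 1) := by
    have hm : 2 * (k + 1) ≤ k.factorial * k.factorial := by nlinarith
    calc 2 * (k + 1).factorial = (2 * (k + 1)) * k.factorial := by
          rw [Nat.factorial_succ]; ring
    _ ≤ (k.factorial * k.factorial) * k.factorial := Nat.mul_le_mul_right _ hm
    _ = k.factorial ^ 3 := by ring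
    _ ≤ k.factorial ^ (k + 1) := Nat.pow_le_pow_right (by omega) (by omega)
  have hmain : (2 * (k + 1).factorial) ^ k.factorial ≤ k.factorial ^ (k + 1).factorial := by
    calc (2 * (k + 1).factorial) ^ k.factorial
        ≤ (k.factorial ^ (k + 1)) ^ k.factorial := Nat.pow_le_pow_left h1 _
    _ = k.factorial ^ (k + 1).factorial := by
        rw [← pow_mul, Nat.factorial_succ, Nat.mul_comm]
  have hb : k ^ (k + 1) < (k + 1).factorial ^ k.factorial := by
    calc k ^ (k + 1) < (k + 1) ^ (k + 1) := Nat.pow_lt_pow_left (by omega) (by omega)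
    _ ≤ (k + 1) ^ k.factorial := Nat.pow_le_pow_right (by omega) hkf
    _ ≤ (k + 1).factorial ^ k.factorial :=
        Nat.pow_le_pow_left (Nat.self_le_factorial _) _
  have h2b : 2 * (k + 1).factorial ^ k.factorial ≤ (2 * (k + 1).factorial) ^ k.factorial := by
    rw [mul_pow]
    exact Nat.mul_le_mul_right _ (Nat.le_self_pow (Nat.factorial_ne_zero k) 2)
  calc (k + 1).factorial ^ k.factorial + k ^ (k + 1)
      < 2 * (k + 1).factorial ^ k.factorial := by omega
  _ ≤ (2 * (k + 1).factorial) ^ k.factorial := h2b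
  _ ≤ k.factorial ^ (k + 1).factorial := hmain
end

section
/- Positive integers k and n satisfy (k!)^(n!) - k^n = (n!)^(k!) - n^k if and only if k = n or (k, n) = (1, 2) or (k, n) = (2, 1). -/
private lemma sq_lt_two_pow' (m : ℕ) (hm : 10 ≤ m) : m ^ 2 < 2 ^ (m - 1) := by
  induction m, hm using Nat.le_induction with
  | base => norm_num
  | succ m hm ih =>
    have h1 : (m + 1) ^ 2 ≤ 2 * m ^ 2 := by nlinarith
    have h2 : 2 * 2 ^ (m - 1) = 2 ^ (m + 1 - 1) := by
      rw [mul_comm, ← pow_succ]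
      congr 1
      omega
    calc (m + 1) ^ 2 ≤ 2 * m ^ 2 := h1
      _ < 2 * 2 ^ (m - 1) := by omega
      _ = 2 ^ (m + 1 - 1) := h2

private lemma log_key (a b : ℝ) (ha : 6 ≤ a) (hab : 4 * a ≤ b) :
    a * Real.log b < (b - 1) * Real.log a := by
  have ha0 : (0:ℝ) < a := by linarith
  have hb0 : (0:ℝ) < b := by linarith
  have he : Real.exp 1 ≤ a := by
    have := Real.exp_one_lt_d9
    linarith
  have he2 : Real.exp 1 ≤ b / 2 := by
    have := Real.exp_one_lt_d9
    linarith
  have hmem1 : a ∈ {x : ℝ | Real.exp 1 ≤ x} := he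
  have hmem2 : b / 2 ∈ {x : ℝ | Real.exp 1 ≤ x} := he2
  have hle : a ≤ b / 2 := by linarith
  have h1 := Real.log_div_self_antitoneOn hmem1 hmem2 hle
  -- h1 : log (b/2) / (b/2) ≤ log a / a
  have hb20 : (0:ℝ) < b / 2 := by linarith
  have h2 : Real.log (b / 2) * a ≤ Real.log a * (b / 2) :=
    (div_le_div_iff₀ hb20 ha0).mp h1
  have hlb2 : Real.log (b / 2) = Real.log b - Real.log 2 :=
    Real.log_div (by linarith) (by norm_num)
  have hl4a : Real.log (4 * a) ≤ Real.log b := Real.log_le_log (by linarith) hab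
  have hl4a' : Real.log (4 * a) = Real.log 2 + Real.log 2 + Real.log a := by
    rw [show (4:ℝ) * a = 2 * (2 * a) by ring, Real.log_mul (by norm_num) (by positivity),
      Real.log_mul (by norm_num) (by positivity)]
    ring
  have hla : 0 < Real.log a := Real.log_pos (by linarith)
  have hl2 : 0 < Real.log 2 := Real.log_pos (by norm_num)
  nlinarith [mul_le_mul_of_nonneg_left hl4a ha0.le, mul_pos ha0 hla]

private lemma pow_lt_pow_sub (k n : ℕ) (hk : 3 ≤ k) (hkn : k < n) :
    n.factorial ^ k.factorial < k.factorial ^ (n.factorial - 1) := by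
  have ha : 6 ≤ k.factorial := by
    calc 6 = Nat.factorial 3 := rfl
    _ ≤ k.factorial := Nat.factorial_le hk
  have hab : 4 * k.factorial ≤ n.factorial := by
    have h1 : (k + 1).factorial ≤ n.factorial := Nat.factorial_le hkn
    have h2 : (k + 1).factorial = (k + 1) * k.factorial := Nat.factorial_succ k
    nlinarith
  have hb1 : 1 ≤ n.factorial := Nat.one_le_iff_ne_zero.mpr n.factorial_ne_zero
  have key := log_key (k.factorial : ℝ) (n.factorial : ℝ)
    (by exact_mod_cast ha) (by exact_mod_cast hab)
  have hreal : ((n.factorial : ℝ)) ^ k.factorial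
      < ((k.factorial : ℝ)) ^ (n.factorial - 1) := by
    rw [← Real.log_lt_log_iff (by positivity) (by positivity)]
    rw [Real.log_pow, Real.log_pow]
    have hcast : ((n.factorial - 1 : ℕ) : ℝ) = (n.factorial : ℝ) - 1 := by
      push_cast [Nat.cast_sub hb1]
      ring
    rw [hcast]
    exact key
  exact_mod_cast hreal

private lemma pow_lt_pow_sub2 (k n : ℕ) (hk : 2 ≤ k) (hkn : k < n) (hn : 4 ≤ n) :
    n.factorial ^ k.factorial < k.factorial ^ (n.factorial - 1) := by
  rcases Nat.lt_or_ge k 3 with hk3 | hk3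
  · -- k = 2
    have hk2 : k = 2 := by omega
    subst hk2
    have h24 : 24 ≤ n.factorial := by
      calc 24 = Nat.factorial 4 := rfl
      _ ≤ n.factorial := Nat.factorial_le hn
    have := sq_lt_two_pow' n.factorial (by omega)
    simpa [Nat.factorial] using this
  · exact pow_lt_pow_sub k n hk3 hkn

private lemma key_ineq (k n : ℕ) (hk : 2 ≤ k) (hkn : k < n) :
    n.factorial ^ k.factorial + k ^ n < k.factorial ^ n.factorial := by
  rcases Nat.lt_or_ge n 4 with hn4 | hn4
  · -- (k,n) = (2,3)
    have hk2 : k = 2 := by omega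
    have hn3 : n = 3 := by omega
    subst hk2; subst hn3
    decide
  · have hM := pow_lt_pow_sub2 k n hk hkn hn4
    have ha2 : 2 ≤ k.factorial := le_trans hk (Nat.self_le_factorial k)
    have hnb : n ≤ n.factorial - 1 := by
      have : n < n.factorial := Nat.lt_factorial_self (by omega)
      omega
    have hkn' : k ^ n ≤ k.factorial ^ (n.factorial - 1) := by
      calc k ^ n ≤ k.factorial ^ n :=
        Nat.pow_le_pow_left (Nat.self_le_factorial k) n
      _ ≤ k.factorial ^ (n.factorial - 1) := Nat.pow_le_pow_right (by omega) hnb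
    have hb1 : 1 ≤ n.factorial := Nat.one_le_iff_ne_zero.mpr n.factorial_ne_zero
    calc n.factorial ^ k.factorial + k ^ n
        < k.factorial ^ (n.factorial - 1) + k.factorial ^ (n.factorial - 1) := by
          omega
      _ ≤ k.factorial ^ (n.factorial - 1) * k.factorial := by
          have := Nat.mul_le_mul_left (k.factorial ^ (n.factorial - 1)) ha2
          omega
      _ = k.factorial ^ (n.factorial - 1 + 1) := by rw [pow_succ]
      _ = k.factorial ^ n.factorial := by congr 1; omega

private lemma key_lemma (k n : ℕ) (hk : 0 < k) (hn : 0 < n) (hkn : k < n)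
    (heq : (Nat.factorial k : ℤ) ^ (Nat.factorial n) - (k : ℤ) ^ n =
      (Nat.factorial n : ℤ) ^ (Nat.factorial k) - (n : ℤ) ^ k) :
    k = 1 ∧ n = 2 := by
  rcases Nat.lt_or_ge k 2 with hk1 | hk2
  · -- k = 1
    have hk1' : k = 1 := by omega
    subst hk1'
    simp [Nat.factorial_one] at heq
    -- heq : 0 = n! - n  (roughly)
    have hfac : (n.factorial : ℤ) = n := by linarith [heq]
    have hfac' : n.factorial = n := by exact_mod_cast hfac
    have : n < 3 := by
      by_contra h
      have := Nat.lt_factorial_self (show 3 ≤ n by omega)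
      omega
    constructor
    · rfl
    · omega
  · exfalso
    have hN := key_ineq k n hk2 hkn
    have hNZ : (n.factorial : ℤ) ^ k.factorial + (k : ℤ) ^ n
        < (k.factorial : ℤ) ^ n.factorial := by exact_mod_cast hN
    have hnk : (0:ℤ) ≤ (n : ℤ) ^ k := by positivity
    linarith

theorem stmt_8 (k n : ℕ) (hk : 0 < k) (hn : 0 < n) :
    ((Nat.factorial k : ℤ) ^ (Nat.factorial n) - (k : ℤ) ^ n =
      (Nat.factorial n : ℤ) ^ (Nat.factorial k) - (n : ℤ) ^ k) ↔
    (k = n ∨ (k = 1 ∧ n = 2) ∨ (k = 2 ∧ n = 1)) := by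
  constructor
  · intro heq
    rcases lt_trichotomy k n with h | h | h
    · right; left; exact key_lemma k n hk hn h heq
    · left; exact h
    · right; right
      have := key_lemma n k hn hk h heq.symm
      exact ⟨this.2, this.1⟩
  · rintro (rfl | ⟨rfl, rfl⟩ | ⟨rfl, rfl⟩)
    · ring
    · decide
    · decide
end

section
/- Positive integers k and n satisfy (k!)^(n!) + k^n = (n!)^(k!) + n^k if and only if k = n. -/
/-!
For `a < b` the two sides cannot agree. If `a ≤ 1` then `a! = 1` and the left side is at most `2`,
while the right side exceeds it. If `2 ≤ a`, write `b! = a! * P`, so `P ≥ b`. The right side is at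
most `2 * (b!)^(a!)` since `b^a ≤ (b!)^(a!)`, and for `P ≥ 4` the bound `2 * a! * P ≤ (a!)^P`, raised
to the power `a!`, gives `2 * (a! * P)^(a!) ≤ (a!)^(a! * P) = (a!)^(b!)`; the left side is larger
still by `a^b > 0`. Only `(a, b) = (2, 3)` has `P < 4`, and it is checked directly.
-/

open Nat

lemma four_mul_le_two_pow {n : ℕ} (hn : 4 ≤ n) : 4 * n ≤ 2 ^ n := by
  induction n, hn using Nat.le_induction with
  | base => norm_num
  | succ n hn ih => rw [pow_succ]; omega

lemma two_mul_mul_le_pow {m P : ℕ} (hm : 2 ≤ m) (hP : 4 ≤ P) : 2 * (m * P) ≤ m ^ P := by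
  obtain ⟨Q, rfl⟩ : ∃ Q, P = Q + 1 := ⟨P - 1, by omega⟩
  have h2Q : 2 * (Q + 1) ≤ 2 ^ Q := by
    have := four_mul_le_two_pow hP
    rw [pow_succ] at this
    omega
  calc 2 * (m * (Q + 1)) = 2 * (Q + 1) * m := by ring
    _ ≤ 2 ^ Q * m := Nat.mul_le_mul_right m h2Q
    _ ≤ m ^ Q * m := Nat.mul_le_mul_right m (Nat.pow_le_pow_left hm Q)
    _ = m ^ (Q + 1) := (pow_succ m Q).symm

lemma two_mul_mul_pow_le_pow_mul {m P : ℕ} (hm : 2 ≤ m) (hP : 4 ≤ P) :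
    2 * (m * P) ^ m ≤ m ^ (m * P) :=
  calc 2 * (m * P) ^ m ≤ 2 ^ m * (m * P) ^ m :=
        Nat.mul_le_mul_right _ (Nat.le_self_pow (by omega) 2)
    _ = (2 * (m * P)) ^ m := (Nat.mul_pow 2 (m * P) m).symm
    _ ≤ (m ^ P) ^ m := Nat.pow_le_pow_left (two_mul_mul_le_pow hm hP) m
    _ = m ^ (m * P) := by rw [← pow_mul, Nat.mul_comm]

lemma le_factorial_div_factorial {a b : ℕ} (hab : a < b) {P : ℕ} (hP : b ! = a ! * P) :
    b ≤ P := by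
  have hle : b * a ! ≤ b ! := by
    rw [← Nat.mul_factorial_pred (by omega : b ≠ 0)]
    exact Nat.mul_le_mul_left b (Nat.factorial_le (by omega))
  rw [hP, Nat.mul_comm] at hle
  exact Nat.le_of_mul_le_mul_left hle (Nat.factorial_pos a)

lemma pow_le_factorial_pow_factorial (a b : ℕ) : b ^ a ≤ b ! ^ a ! :=
  calc b ^ a ≤ b ! ^ a := Nat.pow_le_pow_left (Nat.self_le_factorial b) a
    _ ≤ b ! ^ a ! := Nat.pow_le_pow_right (Nat.factorial_pos b) (Nat.self_le_factorial a)

lemma factorial_pow_add_pow_lt {a b : ℕ} (ha : 2 ≤ a) (hab : a < b) :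
    b ! ^ a ! + b ^ a < a ! ^ b ! + a ^ b := by
  have hpos : 0 < a ^ b := Nat.pow_pos (by omega)
  have hpow := pow_le_factorial_pow_factorial a b
  by_cases hb : b = 3
  · obtain rfl : a = 2 := by omega
    subst hb
    decide
  obtain ⟨P, hP⟩ := Nat.factorial_dvd_factorial hab.le
  have hbP := le_factorial_div_factorial hab hP
  have hmain : 2 * b ! ^ a ! ≤ a ! ^ b ! := by
    rw [hP]
    exact two_mul_mul_pow_le_pow_mul ((Nat.self_le_factorial a).trans' ha) (by omega)
  omega

lemma factorial_pow_add_pow_ne {a b : ℕ} (hab : a < b) :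
    a ! ^ b ! + a ^ b ≠ b ! ^ a ! + b ^ a := by
  rcases Nat.lt_or_ge a 2 with ha | ha
  · have hb := Nat.factorial_pos b
    interval_cases a
    · rw [factorial_zero, one_pow, zero_pow hab.ne', pow_zero, pow_one]
      omega
    · have := Nat.self_le_factorial b
      simp only [factorial_one, one_pow, pow_one]
      omega
  · exact (factorial_pow_add_pow_lt ha hab).ne'

theorem stmt_9_general (k n : ℕ) :
    ((Nat.factorial k) ^ (Nat.factorial n) + k ^ n =
      (Nat.factorial n) ^ (Nat.factorial k) + n ^ k) ↔ k = n := by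
  refine ⟨fun h => ?_, fun h => h ▸ rfl⟩
  rcases Nat.lt_trichotomy k n with hlt | heq | hgt
  · exact absurd h (factorial_pow_add_pow_ne hlt)
  · exact heq
  · exact absurd h.symm (factorial_pow_add_pow_ne hgt)

theorem stmt_9 (k n : ℕ) (hk : 0 < k) (hn : 0 < n) :
    ((Nat.factorial k) ^ (Nat.factorial n) + k ^ n =
      (Nat.factorial n) ^ (Nat.factorial k) + n ^ k) ↔ k = n :=
  stmt_9_general k n
end

section
/- Positive integers k and n satisfy (k!)^n - k^(n!) = (n!)^k - n^(k!) if and only if k = n or (k, n) = (1, 2) or (k, n) = (2, 1). -/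
/-!
Moving the negative terms across, the equation says that `k ! ^ n + n ^ k !` is symmetric in
`k` and `n`. For `2 ≤ k < n` the term `k ^ n !` alone beats the left-hand side: both `k ! ^ n`
and `n ^ k !` are at most `k ^ (n ! - 1)`, because `k ! ≤ k ^ (k - 1)`, `n ≤ k ^ (n - 1)` and
`n * k ! ≤ n !`. So for `k < n` only `k = 1` remains, where the equation reduces to `n ! = n`,
i.e. `n = 2`.
-/

open Nat

theorem Nat.factorial_le_pow_pred (k : ℕ) : k ! ≤ k ^ (k - 1) := by
  have h := factorial_mul_descFactorial (n := k) (k := k - 1) (by omega)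
  rw [factorial_eq_one.mpr (by omega), one_mul] at h
  exact h ▸ descFactorial_le_pow k (k - 1)

theorem Nat.mul_factorial_le_factorial {k n : ℕ} (hkn : k < n) : n * k ! ≤ n ! :=
  calc n * k ! ≤ n * (n - 1)! := Nat.mul_le_mul_left n (factorial_le (by omega))
    _ = n ! := mul_factorial_pred (by omega)

section

variable {k n : ℕ}

theorem factorial_pow_le_pow_factorial_pred (hk : 0 < k) (hkn : k < n) :
    k ! ^ n ≤ k ^ ((n !) - 1) := by
  have hexp : (k - 1) * n ≤ (n !) - 1 := by
    have := mul_factorial_le_factorial hkn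
    have : k * n ≤ n * k ! := mul_comm n k ▸ Nat.mul_le_mul_left n (self_le_factorial k)
    rw [Nat.sub_one_mul]
    omega
  calc k ! ^ n ≤ (k ^ (k - 1)) ^ n := Nat.pow_le_pow_left (factorial_le_pow_pred k) n
    _ = k ^ ((k - 1) * n) := (pow_mul k _ _).symm
    _ ≤ k ^ ((n !) - 1) := Nat.pow_le_pow_right hk hexp

theorem pow_factorial_le_pow_factorial_pred (hk : 2 ≤ k) (hkn : k < n) :
    n ^ k ! ≤ k ^ ((n !) - 1) := by
  have hbase : n ≤ k ^ (n - 1) :=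
    calc n ≤ 2 ^ (n - 1) := by have := (n - 1).lt_two_pow_self; omega
      _ ≤ k ^ (n - 1) := Nat.pow_le_pow_left hk _
  have hexp : (n - 1) * k ! ≤ (n !) - 1 := by
    have := mul_factorial_le_factorial hkn
    have := factorial_pos k
    rw [Nat.sub_one_mul]
    omega
  calc n ^ k ! ≤ (k ^ (n - 1)) ^ k ! := Nat.pow_le_pow_left hbase _
    _ = k ^ ((n - 1) * k !) := (pow_mul k _ _).symm
    _ ≤ k ^ ((n !) - 1) := Nat.pow_le_pow_right (by omega) hexp

theorem factorial_pow_add_pow_factorial_lt (hk : 2 ≤ k) (hkn : k < n) :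
    k ! ^ n + n ^ k ! < n ! ^ k + k ^ n ! :=
  calc k ! ^ n + n ^ k ! ≤ 2 * k ^ ((n !) - 1) := by
        have := factorial_pow_le_pow_factorial_pred (by omega) hkn
        have := pow_factorial_le_pow_factorial_pred hk hkn
        omega
    _ ≤ k * k ^ ((n !) - 1) := Nat.mul_le_mul_right _ hk
    _ = k ^ n ! := by rw [← _root_.pow_succ', Nat.sub_add_cancel (factorial_pos n)]
    _ < n ! ^ k + k ^ n ! := Nat.lt_add_of_pos_left (pow_pos (factorial_pos n) k)

theorem eq_one_two_of_factorial_pow_add_pow_factorial_eq (hk : 0 < k) (hkn : k < n)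
    (h : k ! ^ n + n ^ k ! = n ! ^ k + k ^ n !) : k = 1 ∧ n = 2 := by
  obtain rfl | hk2 : k = 1 ∨ 2 ≤ k := by omega
  · have hfac : n ! = n := by simpa [add_comm] using h.symm
    have : ¬ 3 ≤ n := fun hn => (lt_factorial_self hn).ne' hfac
    omega
  · exact absurd h (factorial_pow_add_pow_factorial_lt hk2 hkn).ne

end

theorem stmt_10 (k n : ℕ) (hk : 0 < k) (hn : 0 < n) :
    ((Nat.factorial k : ℤ) ^ n - (k : ℤ) ^ (Nat.factorial n) =
      (Nat.factorial n : ℤ) ^ k - (n : ℤ) ^ (Nat.factorial k)) ↔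
    (k = n ∨ (k = 1 ∧ n = 2) ∨ (k = 2 ∧ n = 1)) := by
  rw [sub_eq_sub_iff_add_eq_add]
  norm_cast
  constructor
  · intro h
    rcases lt_trichotomy k n with hkn | rfl | hnk
    · exact .inr (.inl (eq_one_two_of_factorial_pow_add_pow_factorial_eq hk hkn h))
    · exact .inl rfl
    · exact .inr (.inr (eq_one_two_of_factorial_pow_add_pow_factorial_eq hn hnk h.symm).symm)
  · rintro (rfl | ⟨rfl, rfl⟩ | ⟨rfl, rfl⟩) <;> rfl
end

section
/- Positive integers k and n satisfy (k!)^n + k^(n!) = (n!)^k + n^(k!) if and only if k = n. -/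
/-!
For `k < n` the two sides are never equal. If `k ≤ 1` the left side is at most `1 + k`, while the
right side is at least `1 + n`. The pair `(k, n) = (2, 3)` is checked by hand. In the remaining
cases `2 ≤ k` and `n = m + 1` with `m ≥ 3`; then `(m + 1)! ≤ 2 ^ m!` and `m + 1 ≤ 2 ^ m` bound both
terms of the right side by `2 ^ (m * m!)`, so the right side is below `2 ^ n! ≤ k ^ n!`.
-/

open Nat

theorem Nat.succ_factorial_le_two_pow_factorial {m : ℕ} (hm : 3 ≤ m) : (m + 1)! ≤ 2 ^ m ! := by
  induction m, hm using Nat.le_induction with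
  | base => decide
  | succ m hm ih =>
    have hsucc : m + 2 ≤ 2 ^ (m + 2) := Nat.lt_two_pow_self.le
    have hexp : m + 2 + m ! ≤ (m + 1)! := by
      have : 2 ≤ m ! := (Nat.factorial_le (by omega : 2 ≤ m)).trans' (by decide)
      rw [Nat.factorial_succ]
      nlinarith
    calc (m + 2)! = (m + 2) * (m + 1)! := Nat.factorial_succ _
      _ ≤ 2 ^ (m + 2) * 2 ^ m ! := Nat.mul_le_mul hsucc ih
      _ = 2 ^ (m + 2 + m !) := (pow_add _ _ _).symm
      _ ≤ 2 ^ (m + 1)! := Nat.pow_le_pow_right two_pos hexp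

theorem Nat.factorial_pow_add_pow_lt_two_pow_factorial {k m : ℕ} (hkm : k ≤ m) (hm : 3 ≤ m) :
    (m + 1)! ^ k + (m + 1) ^ k ! < 2 ^ (m + 1)! := by
  have hfirst : (m + 1)! ^ k ≤ 2 ^ (m * m !) :=
    calc (m + 1)! ^ k ≤ (2 ^ m !) ^ k :=
          Nat.pow_le_pow_left (Nat.succ_factorial_le_two_pow_factorial hm) k
      _ ≤ (2 ^ m !) ^ m := Nat.pow_le_pow_right (Nat.two_pow_pos _) hkm
      _ = 2 ^ (m * m !) := by rw [← pow_mul, mul_comm]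
  have hsecond : (m + 1) ^ k ! ≤ 2 ^ (m * m !) :=
    calc (m + 1) ^ k ! ≤ (2 ^ m) ^ m ! :=
          (Nat.pow_le_pow_left Nat.lt_two_pow_self _).trans
            (Nat.pow_le_pow_right (Nat.two_pow_pos _) (Nat.factorial_le hkm))
      _ = 2 ^ (m * m !) := by rw [← pow_mul]
  have hM : m * m ! + 1 < (m + 1)! := by
    have : 2 ≤ m ! := (Nat.factorial_le (by omega : 2 ≤ m)).trans' (by decide)
    rw [Nat.factorial_succ, Nat.succ_mul]
    omega
  calc (m + 1)! ^ k + (m + 1) ^ k ! ≤ 2 ^ (m * m ! + 1) := by rw [pow_succ]; omega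
    _ < 2 ^ (m + 1)! := Nat.pow_lt_pow_right one_lt_two hM

theorem Nat.factorial_pow_add_pow_ne_of_lt {k n : ℕ} (hkn : k < n) :
    k ! ^ n + k ^ n ! ≠ n ! ^ k + n ^ k ! := by
  rcases Nat.lt_or_ge k 2 with hk | hk
  · have hlhs : k ! ^ n + k ^ n ! ≤ 1 + k := by
      interval_cases k <;> simp [Nat.factorial_ne_zero]
    have hrhs : 1 + n ≤ n ! ^ k + n ^ k ! := by
      rw [Nat.factorial_eq_one.mpr (show k ≤ 1 by omega), pow_one]
      have := Nat.pow_pos (n := k) (Nat.factorial_pos n)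
      omega
    omega
  obtain ⟨m, rfl⟩ : ∃ m, n = m + 1 := ⟨n - 1, by omega⟩
  rcases Nat.lt_or_ge m 3 with hm | hm
  · obtain ⟨rfl, rfl⟩ : k = 2 ∧ m = 2 := by omega
    decide
  · have hrhs := Nat.factorial_pow_add_pow_lt_two_pow_factorial (by omega : k ≤ m) hm
    have hlhs := Nat.pow_le_pow_left hk (m + 1)!
    omega

theorem stmt_11_general (k n : ℕ) :
    ((Nat.factorial k) ^ n + k ^ (Nat.factorial n) =
      (Nat.factorial n) ^ k + n ^ (Nat.factorial k)) ↔ k = n := by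
  refine ⟨fun h => ?_, fun h => h ▸ rfl⟩
  rcases lt_trichotomy k n with hlt | heq | hgt
  · exact absurd h (Nat.factorial_pow_add_pow_ne_of_lt hlt)
  · exact heq
  · exact absurd h.symm (Nat.factorial_pow_add_pow_ne_of_lt hgt)

theorem stmt_11 (k n : ℕ) (hk : 0 < k) (hn : 0 < n) :
    ((Nat.factorial k) ^ n + k ^ (Nat.factorial n) =
      (Nat.factorial n) ^ k + n ^ (Nat.factorial k)) ↔ k = n :=
  stmt_11_general k n
end

section
/- If positive integers k and n with n ≥ k ≥ 3 satisfy (k!)^(n!) + k^n = (n!)^(k!) + n^k, then k divides n. -/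
/-!
For `3 ≤ b < a` one has `a ^ b < b ^ a` (the discrete form of `log x / x` decreasing beyond `e`).
If `k < n`, applying this to `(n, k)` and to `(n!, k!)` makes the right-hand side of the equation
strictly smaller than the left-hand side, so necessarily `k = n`.
-/

theorem Nat.succ_pow_lt_pow_succ {b : ℕ} (hb : 3 ≤ b) : (b + 1) ^ b < b ^ (b + 1) := by
  induction b, hb using Nat.le_induction with
  | base => norm_num
  | succ b hb ih =>
    refine Nat.lt_of_mul_lt_mul_right (a := b ^ (b + 1)) ?_
    calc (b + 2) ^ (b + 1) * b ^ (b + 1)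
        = ((b + 2) * b) ^ (b + 1) := (Nat.mul_pow _ _ _).symm
      _ ≤ ((b + 1) * (b + 1)) ^ (b + 1) := Nat.pow_le_pow_left (by nlinarith) _
      _ = (b + 1) ^ (b + 2) * (b + 1) ^ b := by rw [Nat.mul_pow, ← Nat.pow_add]; ring_nf
      _ < (b + 1) ^ (b + 2) * b ^ (b + 1) := by gcongr

/-- `(a + 1) / a ≤ (b + 1) / b`, and `((b + 1) / b) ^ b < b` by `Nat.succ_pow_lt_pow_succ`. -/
theorem Nat.succ_pow_lt_mul_pow {a b : ℕ} (hb : 3 ≤ b) (hba : b ≤ a) :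
    (a + 1) ^ b < b * a ^ b := by
  refine Nat.lt_of_mul_lt_mul_left (a := b ^ b) ?_
  calc b ^ b * (a + 1) ^ b
      = (b * (a + 1)) ^ b := (Nat.mul_pow _ _ _).symm
    _ ≤ (a * (b + 1)) ^ b := Nat.pow_le_pow_left (by nlinarith) _
    _ = a ^ b * (b + 1) ^ b := Nat.mul_pow _ _ _
    _ < a ^ b * b ^ (b + 1) := by
        have : 0 < a ^ b := Nat.pow_pos (by omega)
        gcongr
        exact Nat.succ_pow_lt_pow_succ hb
    _ = b ^ b * (b * a ^ b) := by ring

theorem Nat.pow_lt_pow_swap {a b : ℕ} (hb : 3 ≤ b) (hba : b < a) : a ^ b < b ^ a := by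
  induction a, hba using Nat.le_induction with
  | base => simpa [Nat.pow_succ, Nat.mul_comm] using Nat.succ_pow_lt_mul_pow hb le_rfl
  | succ a hba ih =>
    calc (a + 1) ^ b < b * a ^ b := Nat.succ_pow_lt_mul_pow hb (by omega)
      _ ≤ b * b ^ a := Nat.mul_le_mul_left _ ih.le
      _ = b ^ (a + 1) := by ring

theorem stmt_13 (k n : ℕ) (hk : 3 ≤ k) (hkn : k ≤ n)
    (h : (Nat.factorial k) ^ (Nat.factorial n) + k ^ n =
      (Nat.factorial n) ^ (Nat.factorial k) + n ^ k) : k ∣ n := by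
  obtain rfl | hlt := hkn.eq_or_lt
  · exact dvd_rfl
  have hfact_k : 3 ≤ k.factorial := hk.trans k.self_le_factorial
  have hfact_lt : k.factorial < n.factorial := (Nat.factorial_lt (by omega)).mpr hlt
  have := Nat.pow_lt_pow_swap hfact_k hfact_lt
  have := Nat.pow_lt_pow_swap hk hlt
  omega
end

section
/- For all integers n > k ≥ 3, (n!)^k - n^(k!) > (k!)^n - k^(n!), as integers. -/
lemma aux_fac (k : ℕ) (hk : 3 ≤ k) : 2 * k ≤ Nat.factorial k := by
  obtain ⟨j, rfl⟩ : ∃ j, k = j + 1 := ⟨k - 1, by omega⟩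
  rw [Nat.factorial_succ]
  have h2 : 2 ≤ Nat.factorial j := by
    calc 2 = Nat.factorial 2 := by norm_num [Nat.factorial]
      _ ≤ Nat.factorial j := Nat.factorial_le (by omega)
  nlinarith

lemma aux1 (m : ℕ) (hm : 1 ≤ m) (k : ℕ) (hk : 3 ≤ k) :
    2 * (m + 1) * Nat.factorial k ≤ Nat.factorial (k + m) := by
  induction m, hm using Nat.le_induction with
  | base =>
    rw [show k + 1 = k + 1 from rfl, Nat.factorial_succ]
    nlinarith [Nat.factorial_pos k]
  | succ m hm ih =>
    rw [show k + (m + 1) = (k + m) + 1 from rfl, Nat.factorial_succ]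
    nlinarith [Nat.factorial_pos k]

lemma aux2 (m : ℕ) (hm : 1 ≤ m) (k : ℕ) (hk : 3 ≤ k) : k + m ≤ k ^ (m + 1) := by
  induction m, hm using Nat.le_induction with
  | base => rw [pow_succ, pow_one]; nlinarith
  | succ m hm ih =>
    rw [pow_succ]
    nlinarith [pow_pos (show 0 < k by omega) (m + 1)]

theorem stmt_14 (n k : ℕ) (hk : 3 ≤ k) (hnk : k < n) :
    (Nat.factorial n : ℤ) ^ k - (n : ℤ) ^ (Nat.factorial k) >
      (Nat.factorial k : ℤ) ^ n - (k : ℤ) ^ (Nat.factorial n) := by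
  have hn4 : 4 ≤ n := by omega
  obtain ⟨m, hnm⟩ : ∃ m, n = k + m := ⟨n - k, by omega⟩
  have hm1 : 1 ≤ m := by omega
  -- n! is even
  obtain ⟨A, hA⟩ : 2 ∣ Nat.factorial n := Nat.dvd_factorial (by norm_num) (by omega)
  have hA1 : 1 ≤ A := by
    have := Nat.factorial_pos n
    omega
  have hkA : (2 : ℕ) ≤ k ^ A :=
    le_trans (by omega) (le_trans (Nat.le_self_pow (by omega) k) le_rfl)
  -- 2 * (k * n) ≤ n!
  have h1 : 2 * (k * n) ≤ Nat.factorial n := by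
    obtain ⟨p, hp⟩ : ∃ p, n = p + 1 := ⟨n - 1, by omega⟩
    have hf : Nat.factorial n = (p + 1) * Nat.factorial p := by
      rw [hp, Nat.factorial_succ]
    have h2k : 2 * k ≤ Nat.factorial p :=
      le_trans (aux_fac k hk) (Nat.factorial_le (by omega))
    rw [hf]
    nlinarith
  -- 2 * ((m+1) * k!) ≤ n!
  have h2 : 2 * ((m + 1) * Nat.factorial k) ≤ Nat.factorial n := by
    rw [hnm]
    have := aux1 m hm1 k hk
    linarith
  have hkn : k * n ≤ A := by
    have : 2 * (k * n) ≤ 2 * A := by omega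
    omega
  have hmk : (m + 1) * Nat.factorial k ≤ A := by omega
  -- (k!)^n ≤ k^A
  have hb1 : Nat.factorial k ^ n ≤ k ^ A := by
    calc Nat.factorial k ^ n ≤ (k ^ k) ^ n :=
          Nat.pow_le_pow_left (Nat.factorial_le_pow k) n
      _ = k ^ (k * n) := by rw [← pow_mul]
      _ ≤ k ^ A := Nat.pow_le_pow_right (by omega) hkn
  -- n^(k!) ≤ k^A
  have hb2 : n ^ Nat.factorial k ≤ k ^ A := by
    calc n ^ Nat.factorial k ≤ (k ^ (m + 1)) ^ Nat.factorial k := by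
          apply Nat.pow_le_pow_left
          rw [hnm]; exact aux2 m hm1 k hk
      _ = k ^ ((m + 1) * Nat.factorial k) := by rw [← pow_mul]
      _ ≤ k ^ A := Nat.pow_le_pow_right (by omega) hmk
  -- k^(n!) ≥ sum
  have hkey : Nat.factorial k ^ n + n ^ Nat.factorial k ≤ k ^ Nat.factorial n := by
    calc Nat.factorial k ^ n + n ^ Nat.factorial k ≤ 2 * k ^ A := by omega
      _ ≤ k ^ A * k ^ A := by nlinarith [pow_pos (show 0 < k by omega) A]
      _ = k ^ (A + A) := by rw [← pow_add]
      _ = k ^ Nat.factorial n := by rw [hA]; ring_nf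
  have hpos : 1 ≤ Nat.factorial n ^ k := Nat.one_le_pow _ _ (Nat.factorial_pos n)
  have : Nat.factorial k ^ n + n ^ Nat.factorial k <
      Nat.factorial n ^ k + k ^ Nat.factorial n := by omega
  have := (Int.ofNat_lt).2 this
  push_cast at this
  linarith
end
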